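/- One has u(0) = ε/2 > 0, hence 0 ∈ Ω; moreover G(0) = ε^{3/2}/√2, the gradient of G vanishes at 0, and the gradient of G is nonzero at every point of Ω other than 0. (This computes the action of the unique Reeb chord c_new created in the middle of the handle of the standard model L_{ε,k}.) -/

import Mathlib

open Finset

namespace ReebChordAction

/-- `q_1² + ⋯ + q_{k+1}²` (0-indexed: coordinates `0,…,k`). -/
noncomputable def sqA (n k : ℕ) (q : Fin n → ℝ) : ℝ :=
  ∑ i ∈ Finset.univ.filter (fun i : Fin n => (i : ℕ) < k + 1), q i ^ 2

/-- `q_{k+2}² + ⋯ + q_n²` (0-indexed: coordinates `k+1,…,n-1`). -/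
noncomputable def sqB (n k : ℕ) (q : Fin n → ℝ) : ℝ :=
  ∑ i ∈ Finset.univ.filter (fun i : Fin n => k + 1 ≤ (i : ℕ)), q i ^ 2

/-- `u(q) = (q_1²+⋯+q_{k+1}²) − (q_{k+2}²+⋯+q_n²) + ρ(q_1²+⋯+q_{k+1}²)·(η+ε/2) − η`. -/
noncomputable def uFun (n k : ℕ) (η ε : ℝ) (ρ : ℝ → ℝ) (q : Fin n → ℝ) : ℝ :=
  sqA n k q - sqB n k q + ρ (sqA n k q) * (η + ε / 2) - η

/-- `Ω = {q : u(q) > 0}`. -/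
noncomputable def Ω (n k : ℕ) (η ε : ℝ) (ρ : ℝ → ℝ) : Set (Fin n → ℝ) :=
  {q | 0 < uFun n k η ε ρ q}

/-- `G(q) = 2·u(q)^{3/2}` (the difference of the two sheets of the front). -/
noncomputable def G (n k : ℕ) (η ε : ℝ) (ρ : ℝ → ℝ) (q : Fin n → ℝ) : ℝ :=
  2 * uFun n k η ε ρ q ^ ((3 : ℝ) / 2)

/-! ### Auxiliary derivative machinery -/

/-- The differential of `q ↦ ∑ i ∈ s, q i ^ 2`. -/
noncomputable def DSq (n : ℕ) (s : Finset (Fin n)) (q : Fin n → ℝ) :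
    (Fin n → ℝ) →L[ℝ] ℝ :=
  ∑ i ∈ s, (2 * q i) • ContinuousLinearMap.proj i

lemma hasFDerivAt_sqsum {n : ℕ} (s : Finset (Fin n)) (q : Fin n → ℝ) :
    HasFDerivAt (fun q : Fin n → ℝ => ∑ i ∈ s, q i ^ 2) (DSq n s q) q := by
  have h : ∀ i ∈ s, HasFDerivAt (fun q : Fin n → ℝ => q i ^ 2)
      ((2 * q i) • ContinuousLinearMap.proj (R := ℝ) (φ := fun _ : Fin n => ℝ) i) q := by
    intro i _
    have h1 : HasDerivAt (fun x : ℝ => x ^ 2) (2 * q i) (q i) := by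
      simpa using hasDerivAt_pow 2 (q i)
    have h2 := (ContinuousLinearMap.proj (R := ℝ) (φ := fun _ : Fin n => ℝ) i).hasFDerivAt (x := q)
    exact h1.comp_hasFDerivAt q h2
  simpa [DSq] using HasFDerivAt.fun_sum h

lemma DSq_apply_single {n : ℕ} (s : Finset (Fin n)) (q : Fin n → ℝ) (j : Fin n) :
    DSq n s q (Pi.single j 1) = if j ∈ s then 2 * q j else 0 := by
  simp [DSq, ContinuousLinearMap.sum_apply, Pi.single_apply, mul_ite,
    Finset.sum_ite_eq' s j]

lemma DSq_zero {n : ℕ} (s : Finset (Fin n)) : DSq n s 0 = 0 := by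
  simp [DSq]

/-- The differential of `uFun`. -/
noncomputable def Du (n k : ℕ) (η ε : ℝ) (ρ : ℝ → ℝ) (q : Fin n → ℝ) :
    (Fin n → ℝ) →L[ℝ] ℝ :=
  (DSq n (Finset.univ.filter (fun i : Fin n => (i : ℕ) < k + 1)) q
    - DSq n (Finset.univ.filter (fun i : Fin n => k + 1 ≤ (i : ℕ))) q)
  + (η + ε / 2) • (deriv ρ (sqA n k q) •
      DSq n (Finset.univ.filter (fun i : Fin n => (i : ℕ) < k + 1)) q)

lemma hasFDerivAt_uFun {n k : ℕ} {η ε : ℝ} {ρ : ℝ → ℝ}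
    (hρ_smooth : ContDiff ℝ (⊤ : ℕ∞) ρ) (q : Fin n → ℝ) :
    HasFDerivAt (uFun n k η ε ρ) (Du n k η ε ρ q) q := by
  have hA : HasFDerivAt (sqA n k)
      (DSq n (Finset.univ.filter (fun i : Fin n => (i : ℕ) < k + 1)) q) q :=
    hasFDerivAt_sqsum _ q
  have hB : HasFDerivAt (sqB n k)
      (DSq n (Finset.univ.filter (fun i : Fin n => k + 1 ≤ (i : ℕ))) q) q :=
    hasFDerivAt_sqsum _ q
  have hρd : HasDerivAt ρ (deriv ρ (sqA n k q)) (sqA n k q) :=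
    (hρ_smooth.differentiable (by simp) (sqA n k q)).hasDerivAt
  have hcomp : HasFDerivAt (fun q => ρ (sqA n k q))
      (deriv ρ (sqA n k q) •
        DSq n (Finset.univ.filter (fun i : Fin n => (i : ℕ) < k + 1)) q) q :=
    hρd.comp_hasFDerivAt q hA
  exact ((hA.sub hB).add (hcomp.mul_const (η + ε / 2))).sub_const η

lemma hasFDerivAt_G {n k : ℕ} {η ε : ℝ} {ρ : ℝ → ℝ}
    (hρ_smooth : ContDiff ℝ (⊤ : ℕ∞) ρ) {q : Fin n → ℝ} (hq : 0 < uFun n k η ε ρ q) :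
    HasFDerivAt (G n k η ε ρ)
      ((3 * uFun n k η ε ρ q ^ ((1 : ℝ) / 2)) • Du n k η ε ρ q) q := by
  have hu := hasFDerivAt_uFun (k := k) (η := η) (ε := ε) hρ_smooth q
  have hpow : HasDerivAt (fun t : ℝ => 2 * t ^ ((3 : ℝ) / 2))
      (3 * uFun n k η ε ρ q ^ ((1 : ℝ) / 2)) (uFun n k η ε ρ q) := by
    have h := (Real.hasDerivAt_rpow_const (x := uFun n k η ε ρ q) (p := (3 : ℝ) / 2)
      (Or.inl hq.ne')).const_mul 2
    convert h using 1
    all_goals first | rfl | (norm_num; ring)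
  exact hpow.comp_hasFDerivAt q hu

/-- Strict convexity of the profile function forces `1 + ρ'(A)·(η+ε/2) > 0` for `A > 0`. -/
lemma factor_pos {η ε : ℝ} {ρ : ℝ → ℝ} (hρ_smooth : ContDiff ℝ (⊤ : ℕ∞) ρ)
    (hρ_conv : ∀ x : ℝ, 0 < iteratedDeriv 2 (fun y => y ^ 2 + ρ (y ^ 2) * (η + ε / 2)) x)
    {A : ℝ} (hA : 0 < A) : 0 < 1 + deriv ρ A * (η + ε / 2) := by
  set c := η + ε / 2
  set f : ℝ → ℝ := fun y => y ^ 2 + ρ (y ^ 2) * c with hf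
  have hρd : Differentiable ℝ ρ := hρ_smooth.differentiable (by simp)
  have hder : ∀ y : ℝ, HasDerivAt f (2 * y + deriv ρ (y ^ 2) * (2 * y) * c) y := by
    intro y
    have h1 : HasDerivAt (fun y : ℝ => y ^ 2) (2 * y) y := by
      simpa using hasDerivAt_pow 2 y
    have h2 : HasDerivAt ρ (deriv ρ (y ^ 2)) (y ^ 2) := (hρd (y ^ 2)).hasDerivAt
    have h3 : HasDerivAt (fun y : ℝ => ρ (y ^ 2)) (deriv ρ (y ^ 2) * (2 * y)) y :=
      HasDerivAt.comp y h2 h1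
    exact h1.add (h3.mul_const c)
  have hderiv_f : deriv f = fun y => 2 * y + deriv ρ (y ^ 2) * (2 * y) * c :=
    funext fun y => (hder y).deriv
  have hmono : StrictMono (deriv f) := by
    apply strictMono_of_deriv_pos
    intro x
    have := hρ_conv x
    rwa [show (2 : ℕ) = 1 + 1 by rfl, iteratedDeriv_succ, iteratedDeriv_one] at this
  have hy : (0 : ℝ) < Real.sqrt A := Real.sqrt_pos.mpr hA
  have h0 : deriv f 0 = 0 := by rw [hderiv_f]; ring
  have hpos : 0 < deriv f (Real.sqrt A) := h0 ▸ hmono hy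
  rw [hderiv_f] at hpos
  have hpos' : 0 < 2 * Real.sqrt A + deriv ρ (Real.sqrt A ^ 2) * (2 * Real.sqrt A) * c := hpos
  rw [Real.sq_sqrt hA.le] at hpos'
  nlinarith

/-- `u(0) = ε/2 > 0`, hence `0 ∈ Ω`; moreover `G(0) = ε^{3/2}/√2`, the gradient of `G`
vanishes at `0`, and the gradient of `G` is nonzero at every other point of `Ω`.  This
computes the action of the unique Reeb chord `c_new` in the middle of the handle. -/
theorem new_reeb_chord_action
    (n k : ℕ) (hn : 1 ≤ n) (hk : k + 1 ≤ n)
    (η ε : ℝ) (hη : 0 < η) (hε : 0 < ε) (ρ : ℝ → ℝ)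
    (hρ_smooth : ContDiff ℝ (⊤ : ℕ∞) ρ)
    (hρ_bd : ∀ u, 0 ≤ ρ u ∧ ρ u ≤ 1)
    (hρ_anti : AntitoneOn ρ (Set.Ici 0))
    (hρ_zero : ρ 0 = 1)
    (hρ_vanish : ∀ u, η + 2 / 3 * ε ≤ u → ρ u = 0)
    (hρ_conv : ∀ x : ℝ, 0 < iteratedDeriv 2 (fun y => y ^ 2 + ρ (y ^ 2) * (η + ε / 2)) x) :
    uFun n k η ε ρ 0 = ε / 2 ∧ 0 < ε / 2 ∧ (0 : Fin n → ℝ) ∈ Ω n k η ε ρ ∧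
      G n k η ε ρ 0 = ε ^ ((3 : ℝ) / 2) / Real.sqrt 2 ∧
      fderiv ℝ (G n k η ε ρ) 0 = 0 ∧
      ∀ q ∈ Ω n k η ε ρ, q ≠ 0 → fderiv ℝ (G n k η ε ρ) q ≠ 0 := by
  have hu0 : uFun n k η ε ρ 0 = ε / 2 := by
    simp [uFun, sqA, sqB, hρ_zero]
  have hε2 : 0 < ε / 2 := by linarith
  have hΩ0 : (0 : Fin n → ℝ) ∈ Ω n k η ε ρ := by
    simp only [Ω, Set.mem_setOf_eq, hu0]; exact hε2
  refine ⟨hu0, hε2, hΩ0, ?_, ?_, ?_⟩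
  · -- G 0 = ε^{3/2}/√2
    have h2 : ((2 : ℝ)) ^ ((3 : ℝ) / 2) = 2 * Real.sqrt 2 := by
      have : ((3 : ℝ) / 2) = 1 + 1 / 2 := by norm_num
      rw [this, Real.rpow_add (by norm_num : (0:ℝ) < 2), Real.rpow_one]
      norm_num [Real.sqrt_eq_rpow]
    have hsqrt2 : Real.sqrt 2 ≠ 0 := by positivity
    rw [G, hu0, Real.div_rpow hε.le (by norm_num : (0:ℝ) ≤ 2), h2]
    field_simp
  · -- gradient vanishes at 0
    have h := (hasFDerivAt_G hρ_smooth (by rw [hu0]; exact hε2)).fderiv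
    rw [h]
    have hDu0 : Du n k η ε ρ 0 = 0 := by
      simp [Du, DSq_zero]
    rw [hDu0, smul_zero]
  · -- gradient nonzero elsewhere on Ω
    intro q hq hq0 hcontra
    have huq : 0 < uFun n k η ε ρ q := hq
    have hfd := (hasFDerivAt_G hρ_smooth huq).fderiv
    rw [hfd] at hcontra
    obtain ⟨j, hj⟩ : ∃ j, q j ≠ 0 := Function.ne_iff.mp hq0
    have happ := congrFun (congrArg (fun L : (Fin n → ℝ) →L[ℝ] ℝ => (L : (Fin n → ℝ) → ℝ))
      hcontra) (Pi.single j 1)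
    have hcoef : (0 : ℝ) < 3 * uFun n k η ε ρ q ^ ((1 : ℝ) / 2) := by
      have := Real.rpow_pos_of_pos huq ((1 : ℝ) / 2)
      linarith
    simp only [ContinuousLinearMap.smul_apply, ContinuousLinearMap.zero_apply,
      smul_eq_mul] at happ
    have hDuj : Du n k η ε ρ q (Pi.single j 1) = 0 := by
      rcases mul_eq_zero.mp happ with h | h
      · exact absurd h hcoef.ne'
      · exact h
    have hDuval : Du n k η ε ρ q (Pi.single j 1) =
        (if (j : ℕ) < k + 1 then 2 * q j else 0)
        - (if k + 1 ≤ (j : ℕ) then 2 * q j else 0)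
        + (η + ε / 2) * (deriv ρ (sqA n k q) *
            (if (j : ℕ) < k + 1 then 2 * q j else 0)) := by
      simp [Du, ContinuousLinearMap.sub_apply, ContinuousLinearMap.add_apply,
        ContinuousLinearMap.smul_apply, DSq_apply_single, smul_eq_mul,
        Finset.mem_filter]
    by_cases hjk : (j : ℕ) < k + 1
    · -- handle direction
      have hjk' : ¬ (k + 1 ≤ (j : ℕ)) := by omega
      rw [hDuval] at hDuj
      simp only [if_pos hjk, if_neg hjk'] at hDuj
      have hApos : 0 < sqA n k q := by
        have hle : q j ^ 2 ≤ sqA n k q := by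
          apply Finset.single_le_sum (f := fun i => q i ^ 2)
          · intro i _; positivity
          · simp [Finset.mem_filter, hjk]; omega
        nlinarith [sq_pos_of_ne_zero hj]
      have hfac := factor_pos hρ_smooth hρ_conv hApos
      have : 2 * q j * (1 + deriv ρ (sqA n k q) * (η + ε / 2)) = 0 := by linarith [hDuj]
      rcases mul_eq_zero.mp this with h | h
      · exact hj (by linarith)
      · linarith
    · have hjk' : k + 1 ≤ (j : ℕ) := by omega
      rw [hDuval] at hDuj
      simp only [if_neg hjk, if_pos hjk'] at hDuj
      apply hj
      linarith

end ReebChordAction
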